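/- Let S be any N²×N² real matrix, set L_x = D_x S and L_y = D_y S, and fix an index i. Define the N²×N² matrix A^i entrywise by a^i_{k,l} = (1/3)[ (D_x)_{i,l}((L_y)_{l,k} + (L_y)_{i,k}) − (D_y)_{i,l}((L_x)_{l,k} + (L_x)_{i,k}) + Σ_m ((D_x)_{i,m}(D_y)_{l,m} − (D_y)_{i,m}(D_x)_{l,m}) S_{m,k} ]. Then A^i has at most 8 nonzero columns: the set { l : ∃ k, a^i_{k,l} ≠ 0 } has cardinality at most 8. -/
import Mathlib


open Matrix
open scoped Kronecker

noncomputable section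

/-- The `N×N` cyclic shift matrix: `E i j = 1` iff `j ≡ i+1 (mod N)`. -/
def shiftE (N : ℕ) : Matrix (Fin N) (Fin N) ℝ :=
  Matrix.of fun i j => if ((i : ℕ) + 1) % N = (j : ℕ) then 1 else 0

/-- The grid spacing `δ = 2π/N`. -/
def gridDelta (N : ℕ) : ℝ := 2 * Real.pi / N

/-- The central divided-difference matrix `D = (E - Eᵀ)/(2δ)`. -/
def Dmat (N : ℕ) : Matrix (Fin N) (Fin N) ℝ :=
  (2 * gridDelta N)⁻¹ • (shiftE N - (shiftE N)ᵀ)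

/-- `D_x = I ⊗ D`. -/
def Dx (N : ℕ) : Matrix (Fin N × Fin N) (Fin N × Fin N) ℝ :=
  (1 : Matrix (Fin N) (Fin N) ℝ) ⊗ₖ Dmat N

/-- `D_y = D ⊗ I`. -/
def Dy (N : ℕ) : Matrix (Fin N × Fin N) (Fin N × Fin N) ℝ :=
  Dmat N ⊗ₖ (1 : Matrix (Fin N) (Fin N) ℝ)

/-- The coefficient matrix `A^i` of the `i`-th component of the Arakawa
energy–enstrophy vector field, written as the quadratic form
`f_i(q) = (q−h)ᵀ A^i q`, with `L_x = D_x S`, `L_y = D_y S`. -/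
def Acoef (N : ℕ) (S : Matrix (Fin N × Fin N) (Fin N × Fin N) ℝ)
    (i : Fin N × Fin N) : Matrix (Fin N × Fin N) (Fin N × Fin N) ℝ :=
  Matrix.of fun k l =>
    (1 / 3 : ℝ) *
      (Dx N i l * ((Dy N * S) l k + (Dy N * S) i k)
        - Dy N i l * ((Dx N * S) l k + (Dx N * S) i k)
        + ∑ m, (Dx N i m * Dy N l m - Dy N i m * Dx N l m) * S m k)


lemma dmat_ne_cases {N : ℕ} [NeZero N] (hN : 3 ≤ N) {a b : Fin N} (h : Dmat N a b ≠ 0) :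
    b = a + 1 ∨ b = a - 1 := by
  have h1 : (1 : Fin N).val = 1 := by
    rw [Fin.val_one']; exact Nat.mod_eq_of_lt (by omega)
  have hE : shiftE N a b ≠ 0 ∨ shiftE N b a ≠ 0 := by
    by_contra hc
    push_neg at hc
    exact h (by simp [Dmat, Matrix.sub_apply, Matrix.transpose_apply, hc.1, hc.2])
  rcases hE with h' | h'
  · left
    have hc : ((a : ℕ) + 1) % N = (b : ℕ) := by
      by_contra hc; exact h' (by simp [shiftE, hc])
    apply Fin.ext
    rw [Fin.val_add, h1, hc]
  · right
    have hc : ((b : ℕ) + 1) % N = (a : ℕ) := by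
      by_contra hc; exact h' (by simp [shiftE, hc])
    have : a = b + 1 := by
      apply Fin.ext
      rw [Fin.val_add, h1, hc]
    rw [this, add_sub_cancel_right]

lemma dx_ne_cases {N : ℕ} {p q : Fin N × Fin N} (h : Dx N p q ≠ 0) :
    q.1 = p.1 ∧ Dmat N p.2 q.2 ≠ 0 := by
  constructor
  · by_contra hne
    apply h
    show (1 : Matrix (Fin N) (Fin N) ℝ) p.1 q.1 * Dmat N p.2 q.2 = 0
    rw [Matrix.one_apply_ne (fun hh => hne hh.symm), zero_mul]
  · intro h0
    apply h
    show (1 : Matrix (Fin N) (Fin N) ℝ) p.1 q.1 * Dmat N p.2 q.2 = 0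
    rw [h0, mul_zero]

lemma dy_ne_cases {N : ℕ} {p q : Fin N × Fin N} (h : Dy N p q ≠ 0) :
    q.2 = p.2 ∧ Dmat N p.1 q.1 ≠ 0 := by
  constructor
  · by_contra hne
    apply h
    show Dmat N p.1 q.1 * (1 : Matrix (Fin N) (Fin N) ℝ) p.2 q.2 = 0
    rw [Matrix.one_apply_ne (fun hh => hne hh.symm), mul_zero]
  · intro h0
    apply h
    show Dmat N p.1 q.1 * (1 : Matrix (Fin N) (Fin N) ℝ) p.2 q.2 = 0
    rw [h0, zero_mul]

/-- for any `S`, the coefficient matrix `A^i` of the `ℰ𝒵` vector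
field has at most `8` nonzero columns. -/
theorem Acoef_nonzero_columns_card_le_eight (N : ℕ) (hN : 3 ≤ N)
    (S : Matrix (Fin N × Fin N) (Fin N × Fin N) ℝ) (i : Fin N × Fin N) :
    Set.ncard {l : Fin N × Fin N | ∃ k, Acoef N S i k l ≠ 0} ≤ 8 := by
  classical
  haveI : NeZero N := ⟨by omega⟩
  set F : Finset (Fin N × Fin N) :=
    {(i.1, i.2+1), (i.1, i.2-1), (i.1+1, i.2), (i.1-1, i.2),
     (i.1+1, i.2+1), (i.1+1, i.2-1), (i.1-1, i.2+1), (i.1-1, i.2-1)} with hF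
  have key : {l : Fin N × Fin N | ∃ k, Acoef N S i k l ≠ 0} ⊆ (F : Set (Fin N × Fin N)) := by
    rintro l ⟨k, hk⟩
    have hor : Dx N i l ≠ 0 ∨ Dy N i l ≠ 0 ∨
        ∃ m, Dx N i m * Dy N l m - Dy N i m * Dx N l m ≠ 0 := by
      by_contra hc
      push_neg at hc
      obtain ⟨h1, h2, h3⟩ := hc
      apply hk
      simp only [Acoef, Matrix.of_apply, h1, h2, zero_mul, sub_zero, zero_add]
      rw [Finset.sum_eq_zero (fun m _ => by rw [h3 m, zero_mul])]
      ring
    have hmem : (l.1 = i.1 ∧ (l.2 = i.2 + 1 ∨ l.2 = i.2 - 1)) ∨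
        (l.2 = i.2 ∧ (l.1 = i.1 + 1 ∨ l.1 = i.1 - 1)) ∨
        ((l.1 = i.1 + 1 ∨ l.1 = i.1 - 1) ∧ (l.2 = i.2 + 1 ∨ l.2 = i.2 - 1)) := by
      rcases hor with h | h | ⟨m, h⟩
      · obtain ⟨ha, hb⟩ := dx_ne_cases h
        exact Or.inl ⟨ha, dmat_ne_cases hN hb⟩
      · obtain ⟨ha, hb⟩ := dy_ne_cases h
        exact Or.inr (Or.inl ⟨ha, dmat_ne_cases hN hb⟩)
      · have h' : Dx N i m * Dy N l m ≠ 0 ∨ Dy N i m * Dx N l m ≠ 0 := by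
          by_contra hc; push_neg at hc; exact h (by rw [hc.1, hc.2, sub_zero])
        refine Or.inr (Or.inr ?_)
        rcases h' with h' | h'
        · obtain ⟨ha, hb⟩ := dx_ne_cases (left_ne_zero_of_mul h')
          obtain ⟨hc', hd⟩ := dy_ne_cases (right_ne_zero_of_mul h')
          constructor
          · rcases dmat_ne_cases hN hd with he | he
            · right; rw [← ha, he, add_sub_cancel_right]
            · left; rw [← ha, he, sub_add_cancel]
          · rw [← hc']; exact dmat_ne_cases hN hb
        · obtain ⟨ha, hb⟩ := dy_ne_cases (left_ne_zero_of_mul h')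
          obtain ⟨hc', hd⟩ := dx_ne_cases (right_ne_zero_of_mul h')
          constructor
          · rw [← hc']; exact dmat_ne_cases hN hb
          · rcases dmat_ne_cases hN hd with he | he
            · right; rw [← ha, he, add_sub_cancel_right]
            · left; rw [← ha, he, sub_add_cancel]
    have hl : l = (i.1, i.2+1) ∨ l = (i.1, i.2-1) ∨ l = (i.1+1, i.2) ∨ l = (i.1-1, i.2) ∨
        l = (i.1+1, i.2+1) ∨ l = (i.1+1, i.2-1) ∨ l = (i.1-1, i.2+1) ∨ l = (i.1-1, i.2-1) := by
      rcases hmem with ⟨h1, h2 | h2⟩ | ⟨h1, h2 | h2⟩ | ⟨h1 | h1, h2 | h2⟩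
      · exact Or.inl (Prod.ext h1 h2)
      · exact Or.inr (Or.inl (Prod.ext h1 h2))
      · exact Or.inr (Or.inr (Or.inl (Prod.ext h2 h1)))
      · exact Or.inr (Or.inr (Or.inr (Or.inl (Prod.ext h2 h1))))
      · exact Or.inr (Or.inr (Or.inr (Or.inr (Or.inl (Prod.ext h1 h2)))))
      · exact Or.inr (Or.inr (Or.inr (Or.inr (Or.inr (Or.inl (Prod.ext h1 h2))))))
      · exact Or.inr (Or.inr (Or.inr (Or.inr (Or.inr (Or.inr (Or.inl (Prod.ext h1 h2)))))))
      · exact Or.inr (Or.inr (Or.inr (Or.inr (Or.inr (Or.inr (Or.inr (Prod.ext h1 h2)))))))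
    refine Finset.mem_coe.mpr ?_
    simp only [hF, Finset.mem_insert, Finset.mem_singleton]
    exact hl
  calc Set.ncard {l : Fin N × Fin N | ∃ k, Acoef N S i k l ≠ 0}
      ≤ Set.ncard (F : Set (Fin N × Fin N)) :=
        Set.ncard_le_ncard key (F.finite_toSet)
    _ = F.card := Set.ncard_coe_finset F
    _ ≤ 8 := by
        refine (Finset.card_insert_le _ _).trans (Nat.succ_le_succ ?_)
        refine (Finset.card_insert_le _ _).trans (Nat.succ_le_succ ?_)
        refine (Finset.card_insert_le _ _).trans (Nat.succ_le_succ ?_)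
        refine (Finset.card_insert_le _ _).trans (Nat.succ_le_succ ?_)
        refine (Finset.card_insert_le _ _).trans (Nat.succ_le_succ ?_)
        refine (Finset.card_insert_le _ _).trans (Nat.succ_le_succ ?_)
        refine (Finset.card_insert_le _ _).trans (Nat.succ_le_succ ?_)
        simp
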